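/- arXiv:2602.06741 — 4 statements merged into one kernel-verified Lean document; each statement's English description precedes it below -/
import Mathlib

section
/- Let Z ⊆ ℝ^d be open and convex and let f : Z → ℝ^m be a function such that for every z ∈ Z, every index i ∉ O (for a fixed O ⊆ {1,...,d}), and every z' ∈ Z differing from z only in coordinate i, we have f(z) = f(z'). Then f(z) depends only on π_O(z): for all z, z' ∈ Z with π_O(z) = π_O(z'), f(z) = f(z'). -/
/-- If `f` on an open convex set `Z` is invariant under changing any single
coordinate outside `O`, then `f` depends only on the coordinates in `O`. -/
theorem stmt_5 (d m : ℕ) (Z : Set (Fin d → ℝ)) (O : Finset (Fin d))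
    (hZopen : IsOpen Z) (hZconv : Convex ℝ Z)
    (f : (Fin d → ℝ) → (Fin m → ℝ))
    (hinv : ∀ z ∈ Z, ∀ i : Fin d, i ∉ O → ∀ z' ∈ Z,
      (∀ j : Fin d, j ≠ i → z' j = z j) → f z = f z') :
    ∀ z ∈ Z, ∀ z' ∈ Z, (∀ i ∈ O, z i = z' i) → f z = f z' := by
  -- Key local lemma: near any point of Z, f is constant along fibers of π_O.
  have key : ∀ x ∈ Z, ∃ r > 0, ∀ y, dist y x < r → (∀ i ∈ O, y i = x i) → f y = f x := by
    intro x hx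
    obtain ⟨r, hr, hball⟩ := Metric.isOpen_iff.1 hZopen x hx
    refine ⟨r, hr, fun y hy hyO => ?_⟩
    set w : Finset (Fin d) → (Fin d → ℝ) := fun s j => if j ∈ s then y j else x j with hw
    have hwball : ∀ s, dist (w s) x < r := by
      intro s
      rw [dist_pi_lt_iff hr]
      intro j
      by_cases h : j ∈ s
      · simp only [hw, h, if_true]
        exact lt_of_le_of_lt (dist_le_pi_dist y x j) hy
      · simpa [hw, h] using hr
    have main : ∀ s : Finset (Fin d), f (w s) = f x := by
      intro s
      induction s using Finset.induction with
      | empty => simp [hw]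
      | @insert a s ha ih =>
        by_cases haO : a ∈ O
        · have : w (insert a s) = w s := by
            funext j
            by_cases hj : j = a
            · subst hj; simp [hw, ha, hyO _ haO]
            · simp [hw, Finset.mem_insert, hj]
          rw [this, ih]
        · have hstep := hinv (w s) (hball (hwball s)) a haO (w (insert a s))
            (hball (hwball (insert a s))) ?_
          · rw [← hstep, ih]
          · intro j hj
            simp [hw, Finset.mem_insert, hj]
    have : y = w Finset.univ := by funext j; simp [hw]
    rw [this]; exact main _
  intro z hz z' hz' hO
  set γ : ℝ → (Fin d → ℝ) := fun t => z + t • (z' - z) with hγ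
  have hγmem : ∀ t ∈ Set.Icc (0:ℝ) 1, γ t ∈ Z := by
    intro t ht
    have := hZconv hz hz' (by linarith [ht.2] : (0:ℝ) ≤ 1 - t) ht.1 (by ring)
    convert this using 1
    funext j
    simp [hγ]
    ring
  have hγO : ∀ i ∈ O, ∀ t : ℝ, γ t i = z i := by
    intro i hi t
    simp [hγ, hO i hi]
  have hγcont : Continuous γ := by
    apply Continuous.add continuous_const
    exact (continuous_id.smul continuous_const)
  set h : Set.Icc (0:ℝ) 1 → (Fin m → ℝ) := fun t => f (γ t) with hh
  have hlc : IsLocallyConstant h := by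
    rw [IsLocallyConstant.iff_exists_open]
    intro t
    obtain ⟨r, hr, hloc⟩ := key (γ t) (hγmem t t.2)
    refine ⟨{s : Set.Icc (0:ℝ) 1 | γ s ∈ Metric.ball (γ t) r}, ?_, ?_, ?_⟩
    · exact (Metric.isOpen_ball.preimage (hγcont.comp continuous_subtype_val))
    · simp [Metric.mem_ball, hr]
    · intro s hs
      exact hloc (γ s) (Metric.mem_ball.1 hs) (fun i hi => by rw [hγO i hi, hγO i hi])
  haveI : PreconnectedSpace (Set.Icc (0:ℝ) 1) := Subtype.preconnectedSpace isPreconnected_Icc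
  have h01 := hlc.apply_eq_of_preconnectedSpace ⟨0, by norm_num⟩ ⟨1, by norm_num⟩
  have hz0 : γ 0 = z := by funext j; simp [hγ]
  have hz1 : γ 1 = z' := by funext j; simp [hγ]
  simpa [hh, hz0, hz1] using h01
end

section
/- Let Z, C ⊆ ℝ^{d} be open convex sets, let P be a finite family of index sets I_A^{(z)}, I_A^{(c)} ⊆ {1,...,d} with ⋃_A I_A^{(z)} = ⋃_A I_A^{(c)} = {1,...,d}, and suppose for each A there are homeomorphisms φ_A^{(z)} : π_{I_A^{(z)}}(Z) → Y_A and φ_A^{(c)} : π_{I_A^{(c)}}(C) → Y_A onto a common space Y_A. Fix a nonempty subfamily 𝒜 ⊆ P and set O^{(z)} = ⋂_{A∈𝒜} I_A^{(z)}, O^{(c)} = ⋂_{A∈𝒜} I_A^{(c)}. Then for each A ∈ 𝒜 the composite g_A := π_{O^{(c)}} ∘ (φ_A^{(c)})^{-1} ∘ φ_A^{(z)}, viewed as a function of z_{I_A^{(z)}}, depends only on the overlap coordinates z_{O^{(z)}}, is independent of the choice of A ∈ 𝒜, and defines a bijection g : π_{O^{(z)}}(Z) → π_{O^{(c)}}(C).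 -/
open Metric in
lemma aux_dep {d : ℕ} {β : Type} (S : Set (Fin d → ℝ)) (hopen : IsOpen S)
    (hconv : Convex ℝ S) (O : Finset (Fin d)) (f : (Fin d → ℝ) → β)
    (hstep : ∀ i : Fin d, i ∉ O → ∀ z ∈ S, ∀ z' ∈ S,
      (∀ j, j ≠ i → z j = z' j) → f z = f z') :
    ∀ z ∈ S, ∀ z' ∈ S, (∀ i ∈ O, z i = z' i) → f z = f z' := by
  -- box step: within a ball contained in S, f only depends on O-coordinates
  have hbox : ∀ w, ∀ ε > (0:ℝ), ball w ε ⊆ S → ∀ w' ∈ ball w ε,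
      (∀ i ∈ O, w i = w' i) → f w = f w' := by
    intro w ε hε hball w' hw' hagree
    set m : ℕ → (Fin d → ℝ) := fun k i => if (i : ℕ) < k then w' i else w i with hm
    have hmem : ∀ k, m k ∈ ball w ε := by
      intro k
      rw [mem_ball, dist_pi_lt_iff hε]
      intro i
      by_cases hik : (i : ℕ) < k
      · simp only [hm, hik, if_pos]
        calc dist (w' i) (w i) ≤ dist w' w := dist_le_pi_dist w' w i
          _ < ε := mem_ball.mp hw'
      · simp [hm, hik, hε]
    have key : ∀ k, f (m k) = f (m 0) := by
      intro k
      induction k with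
      | zero => rfl
      | succ k ih =>
        rcases lt_or_ge k d with hk | hk
        · set i : Fin d := ⟨k, hk⟩ with hi
          by_cases hiO : i ∈ O
          · have heq : m (k+1) = m k := by
              funext j
              simp only [hm]
              rcases lt_trichotomy (j:ℕ) k with h1 | h1 | h1
              · simp [h1, Nat.lt_succ_of_lt h1]
              · have hji : j = i := Fin.ext h1
                rw [if_pos (by omega), if_neg (by omega)]
                exact (hagree j (hji ▸ hiO)).symm
              · simp [Nat.not_lt.mpr (Nat.le_of_lt h1), Nat.not_lt.mpr (Nat.succ_le_of_lt h1)]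
            rw [heq, ih]
          · have := hstep i hiO (m (k+1)) (hball (hmem _)) (m k) (hball (hmem _)) ?_
            · rw [this, ih]
            · intro j hj
              simp only [hm]
              have hiff : ((j:ℕ) < k+1) ↔ ((j:ℕ) < k) := by
                constructor
                · intro h'
                  rcases Nat.lt_succ_iff_lt_or_eq.mp h' with h'' | h''
                  · exact h''
                  · exact absurd (Fin.ext h'') hj
                · exact fun h' => Nat.lt_succ_of_lt h'
              simp only [hiff]
        · have heq : m (k+1) = m k := by
            funext j
            have h1 : (j:ℕ) < k := lt_of_lt_of_le j.isLt hk
            simp [hm, h1, Nat.lt_succ_of_lt h1]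
          rw [heq, ih]
    have h0 : m 0 = w := by funext i; simp [hm]
    have hd : m d = w' := by funext i; simp [hm, i.isLt]
    have := key d
    rw [h0, hd] at this
    exact this.symm
  intro z hz z' hz' hagree
  set E := S ∩ {w | ∀ i ∈ O, w i = z i} with hE
  have hEconv : Convex ℝ E := by
    apply hconv.inter
    intro x hx y hy a b ha hb hab i hi
    simp only [Pi.add_apply, Pi.smul_apply, smul_eq_mul]
    rw [hx i hi, hy i hi, ← add_mul, hab, one_mul]
  choose r hrpos hrball using fun w : S => Metric.isOpen_iff.mp hopen w w.2
  have hloc : ∀ w : S, (w : Fin d → ℝ) ∈ E → ∀ w' ∈ E ∩ ball (w : Fin d → ℝ) (r w),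
      f w' = f w := by
    rintro w hwE w' ⟨hw'E, hw'b⟩
    refine (hbox w (r w) (hrpos w) (hrball w) w' hw'b ?_).symm
    intro i hi
    rw [hwE.2 i hi, hw'E.2 i hi]
  by_contra hne
  set U := ⋃ (w : S) (_ : (w : Fin d → ℝ) ∈ E ∧ f w = f z), ball (w : Fin d → ℝ) (r w) with hU
  set V := ⋃ (w : S) (_ : (w : Fin d → ℝ) ∈ E ∧ f w ≠ f z), ball (w : Fin d → ℝ) (r w) with hV
  have hUopen : IsOpen U := isOpen_iUnion fun _ => isOpen_iUnion fun _ => isOpen_ball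
  have hVopen : IsOpen V := isOpen_iUnion fun _ => isOpen_iUnion fun _ => isOpen_ball
  have hsub : E ⊆ U ∪ V := by
    intro w hw
    by_cases hfw : f w = f z
    · exact Or.inl (Set.mem_iUnion.mpr ⟨⟨w, hw.1⟩, Set.mem_iUnion.mpr ⟨⟨hw, hfw⟩, mem_ball_self (hrpos _)⟩⟩)
    · exact Or.inr (Set.mem_iUnion.mpr ⟨⟨w, hw.1⟩, Set.mem_iUnion.mpr ⟨⟨hw, hfw⟩, mem_ball_self (hrpos _)⟩⟩)
  have hzE : z ∈ E := ⟨hz, fun i _ => rfl⟩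
  have hz'E : z' ∈ E := ⟨hz', fun i hi => (hagree i hi).symm⟩
  have hneU : (E ∩ U).Nonempty :=
    ⟨z, hzE, Set.mem_iUnion.mpr ⟨⟨z, hz⟩, Set.mem_iUnion.mpr ⟨⟨hzE, rfl⟩, mem_ball_self (hrpos _)⟩⟩⟩
  have hneV : (E ∩ V).Nonempty :=
    ⟨z', hz'E, Set.mem_iUnion.mpr ⟨⟨z', hz'⟩, Set.mem_iUnion.mpr ⟨⟨hz'E, fun hc => hne hc.symm⟩, mem_ball_self (hrpos _)⟩⟩⟩
  obtain ⟨x, hxE, hxU, hxV⟩ := hEconv.isPreconnected U V hUopen hVopen hsub hneU hneV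
  obtain ⟨w1, hw1⟩ := Set.mem_iUnion.mp hxU
  obtain ⟨⟨hw1E, hw1f⟩, hxb1⟩ := Set.mem_iUnion.mp hw1
  obtain ⟨w2, hw2⟩ := Set.mem_iUnion.mp hxV
  obtain ⟨⟨hw2E, hw2f⟩, hxb2⟩ := Set.mem_iUnion.mp hw2
  have h1 : f x = f z := (hloc w1 hw1E x ⟨hxE, hxb1⟩).trans hw1f
  have h2 : f x ≠ f z := fun hc => hw2f ((hloc w2 hw2E x ⟨hxE, hxb2⟩).symm.trans hc)
  exact h2 h1

/-- Coordinate projection onto the index set `I`. -/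
def proj {d : ℕ} (I : Finset (Fin d)) (z : Fin d → ℝ) : I → ℝ := fun i => z i

/-- Theorem 1 (action-induced disentanglement): given two minimal action-induced
representations `Z` and `C` of the same family of ground truths `Y_A`, the overlap
coordinates of a nonempty subfamily `𝒜` of actions determine each other via a
bijection `g` which, composed with the projection onto the overlap, agrees with
`π_{O^{(c)}} ∘ (φ_A^{(c)})⁻¹ ∘ φ_A^{(z)}` for every `A ∈ 𝒜`. -/
theorem stmt_11 (d : ℕ) (ι : Type) [Fintype ι]
    (Y : ι → Type) [∀ A, TopologicalSpace (Y A)]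
    (Z C : Set (Fin d → ℝ))
    (hZopen : IsOpen Z) (hZconv : Convex ℝ Z)
    (hCopen : IsOpen C) (hCconv : Convex ℝ C)
    (Iz Ic : ι → Finset (Fin d))
    (hcovz : ∀ i : Fin d, ∃ A : ι, i ∈ Iz A)
    (hcovc : ∀ i : Fin d, ∃ A : ι, i ∈ Ic A)
    (φz : (A : ι) → (↥(Iz A) → ℝ) → Y A)
    (φc : (A : ι) → (↥(Ic A) → ℝ) → Y A)
    (ψz : (A : ι) → Y A → (↥(Iz A) → ℝ))
    (ψc : (A : ι) → Y A → (↥(Ic A) → ℝ))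
    -- the `φ` are homeomorphisms onto the common spaces `Y A`
    (hφzcont : ∀ A, ContinuousOn (φz A) (proj (Iz A) '' Z))
    (hφccont : ∀ A, ContinuousOn (φc A) (proj (Ic A) '' C))
    (hφzsurj : ∀ A, Set.SurjOn (φz A) (proj (Iz A) '' Z) Set.univ)
    (hφcsurj : ∀ A, Set.SurjOn (φc A) (proj (Ic A) '' C) Set.univ)
    (hψzcont : ∀ A, Continuous (ψz A)) (hψccont : ∀ A, Continuous (ψc A))
    (hψz : ∀ A, ∀ w ∈ proj (Iz A) '' Z, ψz A (φz A w) = w)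
    (hψc : ∀ A, ∀ w ∈ proj (Ic A) '' C, ψc A (φc A w) = w)
    -- compatibility: `Z` and `C` parameterize the same ground-truth outputs
    (h : (Fin d → ℝ) → (Fin d → ℝ)) (hbij : Set.BijOn h Z C)
    (hcompat : ∀ A, ∀ z ∈ Z, φz A (proj (Iz A) z) = φc A (proj (Ic A) (h z)))
    -- the nonempty subfamily `𝒜` and the overlap index sets
    (𝒜 : Finset ι) (h𝒜 : 𝒜.Nonempty)
    (Oz Oc : Finset (Fin d))
    (hOz : ∀ i : Fin d, i ∈ Oz ↔ ∀ A ∈ 𝒜, i ∈ Iz A)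
    (hOc : ∀ i : Fin d, i ∈ Oc ↔ ∀ A ∈ 𝒜, i ∈ Ic A) :
    ∃ g : (↥Oz → ℝ) → (↥Oc → ℝ),
      Set.BijOn g (proj Oz '' Z) (proj Oc '' C) ∧
      ∀ (A : ι) (hA : A ∈ 𝒜), ∀ z ∈ Z,
        g (proj Oz z) =
          fun i : ↥Oc =>
            ψc A (φz A (proj (Iz A) z)) ⟨i.1, (hOc i.1).mp i.2 A hA⟩ := by
  classical
  have hmemz : ∀ A, ∀ z ∈ Z, proj (Iz A) z ∈ proj (Iz A) '' Z := fun A z hz => ⟨z, hz, rfl⟩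
  have hmemc : ∀ A, ∀ c ∈ C, proj (Ic A) c ∈ proj (Ic A) '' C := fun A c hc => ⟨c, hc, rfl⟩
  have hrep : ∀ A ∈ 𝒜, ∀ z ∈ Z, ∀ (j : Fin d) (hj : j ∈ Ic A),
      h z j = ψc A (φz A (proj (Iz A) z)) ⟨j, hj⟩ := by
    intro A hA z hz j hj
    rw [hcompat A z hz, hψc A _ (hmemc A _ (hbij.1 hz))]
    rfl
  have hfdep : ∀ z ∈ Z, ∀ z' ∈ Z, (∀ i ∈ Oz, z i = z' i) →
      proj Oc (h z) = proj Oc (h z') := by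
    apply aux_dep Z hZopen hZconv Oz
    intro i hi z hz z' hz' hag
    obtain ⟨A, hA, hiA⟩ : ∃ A ∈ 𝒜, i ∉ Iz A := by
      by_contra hc
      push_neg at hc
      exact hi ((hOz i).mpr hc)
    have hproj : proj (Iz A) z = proj (Iz A) z' := by
      funext j
      exact hag j (fun hji => hiA (hji ▸ j.2))
    funext jj
    have hjc : (jj : Fin d) ∈ Ic A := (hOc jj).mp jj.2 A hA
    calc proj Oc (h z) jj = h z jj := rfl
      _ = ψc A (φz A (proj (Iz A) z)) ⟨jj, hjc⟩ := hrep A hA z hz jj hjc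
      _ = ψc A (φz A (proj (Iz A) z')) ⟨jj, hjc⟩ := by rw [hproj]
      _ = h z' jj := (hrep A hA z' hz' jj hjc).symm
  set h' := Function.invFunOn h Z with hh'
  have hinv : Set.InvOn h' h Z C := hbij.invOn_invFunOn
  have hmt' : Set.MapsTo h' C Z := hbij.surjOn.mapsTo_invFunOn
  have hrep' : ∀ A ∈ 𝒜, ∀ c ∈ C, ∀ (j : Fin d) (hj : j ∈ Iz A),
      h' c j = ψz A (φc A (proj (Ic A) c)) ⟨j, hj⟩ := by
    intro A hA c hc j hj
    have hzc : h' c ∈ Z := hmt' hc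
    have heq : φc A (proj (Ic A) c) = φz A (proj (Iz A) (h' c)) := by
      conv_lhs => rw [← hinv.2 hc]
      rw [hcompat A _ hzc]
    rw [heq, hψz A _ (hmemz A _ hzc)]
    rfl
  have hgdep : ∀ c ∈ C, ∀ c' ∈ C, (∀ i ∈ Oc, c i = c' i) →
      proj Oz (h' c) = proj Oz (h' c') := by
    apply aux_dep C hCopen hCconv Oc
    intro i hi c hc c' hc' hag
    obtain ⟨A, hA, hiA⟩ : ∃ A ∈ 𝒜, i ∉ Ic A := by
      by_contra hcc
      push_neg at hcc
      exact hi ((hOc i).mpr hcc)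
    have hproj : proj (Ic A) c = proj (Ic A) c' := by
      funext j
      exact hag j (fun hji => hiA (hji ▸ j.2))
    funext jj
    have hjz : (jj : Fin d) ∈ Iz A := (hOz jj).mp jj.2 A hA
    calc proj Oz (h' c) jj = h' c jj := rfl
      _ = ψz A (φc A (proj (Ic A) c)) ⟨jj, hjz⟩ := hrep' A hA c hc jj hjz
      _ = ψz A (φc A (proj (Ic A) c')) ⟨jj, hjz⟩ := by rw [hproj]
      _ = h' c' jj := (hrep' A hA c' hc' jj hjz).symm
  set g : (↥Oz → ℝ) → (↥Oc → ℝ) := fun w =>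
    if hw : ∃ z ∈ Z, proj Oz z = w then proj Oc (h hw.choose) else fun _ => 0 with hg
  have gkey : ∀ z ∈ Z, g (proj Oz z) = proj Oc (h z) := by
    intro z hz
    have hw : ∃ z' ∈ Z, proj Oz z' = proj Oz z := ⟨z, hz, rfl⟩
    simp only [hg]
    rw [dif_pos hw]
    apply hfdep _ hw.choose_spec.1 _ hz
    intro i hi
    exact congrFun hw.choose_spec.2 ⟨i, hi⟩
  refine ⟨g, ⟨?_, ?_, ?_⟩, ?_⟩
  · rintro w ⟨z, hz, rfl⟩
    rw [gkey z hz]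
    exact ⟨h z, hbij.1 hz, rfl⟩
  · rintro w ⟨z, hz, rfl⟩ w' ⟨z', hz', rfl⟩ heq
    rw [gkey z hz, gkey z' hz'] at heq
    have := hgdep (h z) (hbij.1 hz) (h z') (hbij.1 hz')
      (fun i hi => congrFun heq ⟨i, hi⟩)
    rwa [hinv.1 hz, hinv.1 hz'] at this
  · rintro cw ⟨c, hc, rfl⟩
    refine ⟨proj Oz (h' c), ⟨h' c, hmt' hc, rfl⟩, ?_⟩
    rw [gkey _ (hmt' hc), hinv.2 hc]
  · intro A hA z hz
    rw [gkey z hz]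
    funext i
    exact hrep A hA z hz i.1 ((hOc i.1).mp i.2 A hA)
end

section
/- Let Z ⊆ ℝ^d be open and convex, O ⊆ {1,...,d}, and let {I_A}_{A∈𝒜} be index sets with ⋂_{A∈𝒜} I_A = O, so that for every i ∉ O there exists A ∈ 𝒜 with i ∉ I_A. Suppose f : Z → ℝ^m satisfies: for each A ∈ 𝒜, f(z) depends only on π_{I_A}(z) (i.e., f(z) = f(z') whenever π_{I_A}(z) = π_{I_A}(z')). Then f depends only on π_O(z): f(z) = f(z') whenever π_O(z) = π_O(z'). -/
/-- Hybrid lemma: if all coordinate-wise mixtures of `x` and `y` lie in `Z`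
and `x, y` agree on `O`, then `f x = f y`. -/
lemma hybrid_eq (d m : ℕ) (ι : Type)
    (Z : Set (Fin d → ℝ))
    (I : ι → Finset (Fin d)) (O : Finset (Fin d))
    (hcov : ∀ i : Fin d, i ∉ O → ∃ A : ι, i ∉ I A)
    (f : (Fin d → ℝ) → (Fin m → ℝ))
    (hf : ∀ A : ι, ∀ z ∈ Z, ∀ z' ∈ Z, (∀ i ∈ I A, z i = z' i) → f z = f z')
    (x y : Fin d → ℝ)
    (hmem : ∀ s : Finset (Fin d), (fun i => if i ∈ s then y i else x i) ∈ Z)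
    (hagree : ∀ i ∈ O, x i = y i) : f x = f y := by
  set h : Finset (Fin d) → (Fin d → ℝ) := fun s i => if i ∈ s then y i else x i with hh
  have key : ∀ s : Finset (Fin d), f (h s) = f x := by
    intro s
    induction s using Finset.induction_on with
    | empty =>
        have he : h ∅ = x := by funext i; simp [hh]
        rw [he]
    | @insert j s hjs ih =>
        by_cases hjO : j ∈ O
        · have heq : h (insert j s) = h s := by
            funext i
            by_cases hij : i = j
            · subst hij
              simp only [hh, Finset.mem_insert, true_or, if_true]
              by_cases his : i ∈ s
              · simp [his]
              · simp [his, (hagree _ hjO).symm]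
            · simp [hh, Finset.mem_insert, hij]
          rw [heq]; exact ih
        · obtain ⟨A, hA⟩ := hcov _ hjO
          have hstep := hf A (h (insert j s)) (hmem _) (h s) (hmem _) ?_
          · rw [hstep]; exact ih
          · intro i hi
            have hij : i ≠ j := fun e => hA (e ▸ hi)
            simp [hh, Finset.mem_insert, hij]
  have hy : h Finset.univ = y := by funext i; simp [hh]
  have := key Finset.univ
  rw [hy] at this
  exact this.symm

/-- If `f` on an open convex set `Z ⊆ ℝ^d` depends only on the coordinates in
`I_A` for each action `A` of a family with intersection `O` (and every index
outside `O` is missed by some `I_A`), then `f` depends only on the coordinates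
in `O`. -/
theorem stmt_12 (d m : ℕ) (ι : Type) [Nonempty ι]
    (Z : Set (Fin d → ℝ)) (hZopen : IsOpen Z) (hZconv : Convex ℝ Z)
    (I : ι → Finset (Fin d)) (O : Finset (Fin d))
    (hO : ∀ i : Fin d, i ∈ O ↔ ∀ A : ι, i ∈ I A)
    (hcov : ∀ i : Fin d, i ∉ O → ∃ A : ι, i ∉ I A)
    (f : (Fin d → ℝ) → (Fin m → ℝ))
    (hf : ∀ A : ι, ∀ z ∈ Z, ∀ z' ∈ Z, (∀ i ∈ I A, z i = z' i) → f z = f z') :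
    ∀ z ∈ Z, ∀ z' ∈ Z, (∀ i ∈ O, z i = z' i) → f z = f z' := by
  intro z hz z' hz' hOagree
  -- the segment from z to z'
  set γ : ℝ → (Fin d → ℝ) := fun t i => z i + t * (z' i - z i) with hγ
  have hγcont : Continuous γ := by
    apply continuous_pi
    intro i
    fun_prop
  have hγmem : ∀ t ∈ Set.Icc (0:ℝ) 1, γ t ∈ Z := by
    intro t ht
    have := hZconv hz hz' (a := 1 - t) (b := t) (by linarith [ht.2]) ht.1 (by ring)
    convert this using 1
    funext i
    simp [hγ, Pi.add_apply, Pi.smul_apply, smul_eq_mul]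
    ring
  have hγO : ∀ i ∈ O, ∀ t s : ℝ, γ t i = γ s i := by
    intro i hi t s
    simp [hγ, hOagree i hi]
  -- f ∘ γ restricted to Icc 0 1 is locally constant
  set g : Set.Icc (0:ℝ) 1 → (Fin m → ℝ) := fun t => f (γ t) with hg
  have hlc : IsLocallyConstant g := by
    rw [IsLocallyConstant.iff_exists_open]
    intro t
    obtain ⟨ε, hε, hball⟩ := Metric.isOpen_iff.1 hZopen (γ t)
      (hγmem t t.2)
    refine ⟨Subtype.val ⁻¹' (γ ⁻¹' Metric.ball (γ t) ε), ?_, ?_, ?_⟩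
    · exact (IsOpen.preimage hγcont Metric.isOpen_ball).preimage continuous_subtype_val
    · simp [Metric.mem_ball, hε]
    · intro s hs
      have hsball : γ s ∈ Metric.ball (γ (t : ℝ)) ε := hs
      have hmix : ∀ u : Finset (Fin d),
          (fun i => if i ∈ u then γ t i else γ s i) ∈ Z := by
        intro u
        apply hball
        rw [Metric.mem_ball, dist_pi_lt_iff hε]
        intro i
        by_cases hiu : i ∈ u
        · simp [hiu, hε]
        · simp only [hiu, if_false]
          calc dist (γ (s:ℝ) i) (γ (t:ℝ) i) ≤ dist (γ (s:ℝ)) (γ (t:ℝ)) :=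
                dist_le_pi_dist _ _ i
            _ < ε := by rwa [Metric.mem_ball] at hsball
      have := hybrid_eq d m ι Z I O hcov f hf (γ s) (γ t) hmix
        (fun i hi => hγO i hi s t)
      exact this
  haveI : PreconnectedSpace (Set.Icc (0:ℝ) 1) :=
    Subtype.preconnectedSpace isPreconnected_Icc
  have h01 : g ⟨0, by norm_num⟩ = g ⟨1, by norm_num⟩ :=
    hlc.apply_eq_of_preconnectedSpace _ _
  have hz0 : γ 0 = z := by funext i; simp [hγ]
  have hz1 : γ 1 = z' := by funext i; simp [hγ]
  simpa [hg, hz0, hz1] using h01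
end

section
/- There exist no functions f₁, f₂, f₃ : ℝ → ℝ, each a bijection onto its image with continuous inverse, such that the map (m, q) ↦ (f₁(m), f₂(q/m), f₃(q)) from (0,∞) × (0,∞) to ℝ³ has an open image in ℝ³. -/
/-- No minAIR exists for the tasks `y₁ = mg`, `y₂ = qE/m`, `y₃ = q`: there are no
injective maps `f₁, f₂, f₃ : ℝ → ℝ` with continuous inverses such that
`(m, q) ↦ (f₁(m), f₂(q/m), f₃(q))` has open image in `ℝ³`. -/
theorem stmt_14 :
    ¬ ∃ f₁ f₂ f₃ : ℝ → ℝ,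
      (Function.Injective f₁ ∧
        ∃ g₁ : ℝ → ℝ, ContinuousOn g₁ (Set.range f₁) ∧ ∀ x, g₁ (f₁ x) = x) ∧
      (Function.Injective f₂ ∧
        ∃ g₂ : ℝ → ℝ, ContinuousOn g₂ (Set.range f₂) ∧ ∀ x, g₂ (f₂ x) = x) ∧
      (Function.Injective f₃ ∧
        ∃ g₃ : ℝ → ℝ, ContinuousOn g₃ (Set.range f₃) ∧ ∀ x, g₃ (f₃ x) = x) ∧
      IsOpen ((fun p : ℝ × ℝ => (f₁ p.1, f₂ (p.2 / p.1), f₃ p.2)) ''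
        (Set.Ioi (0:ℝ) ×ˢ Set.Ioi (0:ℝ))) := by
  rintro ⟨f₁, f₂, f₃, ⟨hf₁, -⟩, ⟨hf₂, -⟩, ⟨hf₃, -⟩, hopen⟩
  set S := ((fun p : ℝ × ℝ => (f₁ p.1, f₂ (p.2 / p.1), f₃ p.2)) ''
      (Set.Ioi (0:ℝ) ×ˢ Set.Ioi (0:ℝ))) with hS
  have hp : (f₁ 1, f₂ 1, f₃ 1) ∈ S := by
    refine ⟨(1, 1), ⟨Set.mem_Ioi.2 one_pos, Set.mem_Ioi.2 one_pos⟩, ?_⟩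
    norm_num
  obtain ⟨ε, hε, hball⟩ := Metric.isOpen_iff.1 hopen _ hp
  have hq : (f₁ 1, f₂ 1, f₃ 1 + ε / 2) ∈ S := by
    apply hball
    have : dist ((f₁ 1, f₂ 1, f₃ 1 + ε / 2) : ℝ × ℝ × ℝ) (f₁ 1, f₂ 1, f₃ 1) = ε / 2 := by
      simp [Prod.dist_eq, Real.dist_eq, abs_of_pos, hε, le_of_lt (half_pos hε)]
    rw [Metric.mem_ball, this]
    linarith
  obtain ⟨⟨m, q⟩, ⟨hm, hq'⟩, heq⟩ := hq
  simp only [Prod.mk.injEq] at heq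
  obtain ⟨h1, h2, h3⟩ := heq
  have hm1 : m = 1 := hf₁ h1
  have hq1 : q = 1 := by
    have := hf₂ h2
    rw [hm1, div_one] at this
    exact this
  rw [hq1] at h3
  linarith
end
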